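/- In the two-sided card model, if i ≤ j then Pr[X^i > Y^j] ≥ p(i, j), where p(i, j) = Σ_{k=0}^{j-1} C(i-1+k, k)/2^{i+k}; symmetrically if i ≥ j then Pr[X^i > Y^j] ≤ p(i, j). -/

import Mathlib

open scoped Classical

/-- The `k`-th largest element (1-indexed) of a finite set of reals, defaulting to `0`. -/
noncomputable def kthLargest (s : Finset ℝ) (k : ℕ) : ℝ :=
  ((s.sort (· ≤ ·)).reverse).getD (k - 1) 0

/-- The probability of an event under the uniform distribution on a finite type. -/
noncomputable def uniformPr {α : Type*} [Fintype α] (E : α → Prop) : ℝ :=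
  ((Finset.univ.filter E).card : ℝ) / (Fintype.card α : ℝ)

/-!
Let `S` be the top `i+j-1` values. Then `X^i > Y^j` holds exactly when at least `i` values of
`S` land in `X`. A card with both values in `S` contributes exactly one of them to `X`; each of
the remaining `M` values of `S` lies on its own card and lands in `X` independently with
probability `1/2`. So with `c` full cards in `S` (`M + 2c = i+j-1`) the probability is
`Pr[Bin(M) ≥ i - c]`, while `p(i,j) = Pr[Bin(i+j-1) ≥ i]` (negative-binomial identity).
Replacing one sure success by two fair coins gives
`Pr[Bin(M+2) ≥ r+1] - Pr[Bin(M) ≥ r] = (C(M,r-1) - C(M,r)) / 2^(M+2)`, which is `≤ 0` for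
`2r ≤ M + 1` and `≥ 0` for `2r ≥ M + 1`; doing this for the `c` full cards gives both
inequalities.
-/

open Finset Function

theorem kthLargest_eq_orderEmbOfFin {s : Finset ℝ} {k : ℕ} (hk : 1 ≤ k) (hks : k ≤ #s) :
    kthLargest s k = s.orderEmbOfFin rfl ⟨#s - k, by omega⟩ := by
  have hlen : k - 1 < (s.sort (· ≤ ·)).reverse.length := by
    simp only [List.length_reverse, length_sort]; omega
  rw [kthLargest, List.getD_eq_getElem _ _ hlen, List.getElem_reverse, orderEmbOfFin_apply]
  congr 1
  simp only [length_sort]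
  omega

theorem card_filter_orderEmbOfFin_le (s : Finset ℝ) (p : Fin #s) :
    #{x ∈ s | s.orderEmbOfFin rfl p ≤ x} = #s - p := by
  set e := s.orderEmbOfFin rfl
  calc #{x ∈ s | e p ≤ x} = #((univ.filter (p ≤ ·)).image e) := by
        congr 1
        ext x
        simp only [mem_filter, mem_image, mem_univ, true_and]
        constructor
        · rintro ⟨hx, hpx⟩
          obtain ⟨q, rfl⟩ : x ∈ Set.range e := by simpa [e] using hx
          exact ⟨q, e.le_iff_le.1 hpx, rfl⟩
        · rintro ⟨q, hpq, rfl⟩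
          exact ⟨orderEmbOfFin_mem _ _ _, e.le_iff_le.2 hpq⟩
    _ = #s - p := by
        rw [card_image_of_injective _ e.injective, ← Fin.card_Ici]
        congr 1
        ext q
        simp

theorem le_kthLargest_iff {s : Finset ℝ} {k : ℕ} (hk : 1 ≤ k) (hks : k ≤ #s) (v : ℝ) :
    v ≤ kthLargest s k ↔ k ≤ #{x ∈ s | v ≤ x} := by
  have hcard : #{x ∈ s | kthLargest s k ≤ x} = k := by
    rw [kthLargest_eq_orderEmbOfFin hk hks, card_filter_orderEmbOfFin_le]
    show #s - (#s - k) = k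
    omega
  have hmem : kthLargest s k ∈ s := by
    rw [kthLargest_eq_orderEmbOfFin hk hks]
    exact orderEmbOfFin_mem _ _ _
  constructor
  · intro hv
    calc k = #{x ∈ s | kthLargest s k ≤ x} := hcard.symm
      _ ≤ #{x ∈ s | v ≤ x} := card_le_card (monotone_filter_right _ fun x _ hx => hv.trans hx)
  · intro hkv
    by_contra! hlt
    have hssub : {x ∈ s | v ≤ x} ⊂ {x ∈ s | kthLargest s k ≤ x} :=
      (ssubset_iff_of_subset (monotone_filter_right _ fun x _ hx => hlt.le.trans hx)).2
        ⟨kthLargest s k, by simp [hmem], by simp [hlt]⟩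
    have := card_lt_card hssub
    omega

theorem kthLargest_lt_kthLargest_iff {X Y : Finset ℝ} {i j : ℕ} (hi : 1 ≤ i) (hiX : i ≤ #X)
    (hj : 1 ≤ j) (hjY : j ≤ #Y) {v : ℝ}
    (hv : #{x ∈ X | v ≤ x} + #{y ∈ Y | v ≤ y} + 1 = i + j) :
    kthLargest Y j < kthLargest X i ↔ i ≤ #{x ∈ X | v ≤ x} := by
  have hX := le_kthLargest_iff hi hiX v
  have hY := le_kthLargest_iff hj hjY v
  by_cases hXi : i ≤ #{x ∈ X | v ≤ x}
  · simp only [hXi, iff_true]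
    exact (not_le.1 fun h => by have := hY.1 h; omega).trans_le (hX.2 hXi)
  · simp only [hXi, iff_false, not_lt]
    exact (not_le.1 (mt hX.1 hXi)).le.trans (hY.2 (by omega))

theorem card_filter_image_of_injective {α : Type*} {a : α → ℝ} (ha : Injective a)
    (s : Finset α) (v : ℝ) : #{y ∈ s.image a | v ≤ y} = #{x ∈ s | v ≤ a x} := by
  rw [filter_image, card_image_of_injective _ ha]

theorem card_filter_true_add_card_filter_false {α : Type*} (g : α → Bool) (S : Finset α) :
    #{x ∈ S | g x = true} + #{x ∈ S | g x = false} = #S := by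
  simpa using card_filter_add_card_filter_not (s := S) (fun x => g x = true)

theorem kthLargest_image_lt_kthLargest_image_iff {α : Type*} [Fintype α] {a : α → ℝ}
    (ha : Injective a) (g : α → Bool) {i j : ℕ} (hi : 1 ≤ i)
    (hiX : i ≤ #(univ.filter fun x => g x = true)) (hj : 1 ≤ j)
    (hjY : j ≤ #(univ.filter fun x => g x = false)) {v : ℝ}
    (hv : #(univ.filter fun x => v ≤ a x) + 1 = i + j) :
    kthLargest ((univ.filter fun x => g x = false).image a) j <
        kthLargest ((univ.filter fun x => g x = true).image a) i ↔
      i ≤ #{x ∈ univ.filter (fun x => v ≤ a x) | g x = true} := by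
  have hXY : #{y ∈ (univ.filter fun x => g x = true).image a | v ≤ y} +
      #{y ∈ (univ.filter fun x => g x = false).image a | v ≤ y} + 1 = i + j := by
    rw [card_filter_image_of_injective ha, card_filter_image_of_injective ha, filter_comm,
      filter_comm (fun x => g x = false), card_filter_true_add_card_filter_false, hv]
  rw [kthLargest_lt_kthLargest_iff hi (by rwa [card_image_of_injective _ ha]) hj
    (by rwa [card_image_of_injective _ ha]) hXY, card_filter_image_of_injective ha, filter_comm]

def binomTail (M r : ℕ) : ℕ := ∑ t ∈ range (M + 1), if r ≤ t then M.choose t else 0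

theorem binomTail_zero_right (M : ℕ) : binomTail M 0 = 2 ^ M := by
  simp [binomTail, Nat.sum_range_choose]

theorem binomTail_of_lt {M r : ℕ} (h : M < r) : binomTail M r = 0 :=
  sum_eq_zero fun t ht => if_neg (by rw [mem_range] at ht; omega)

theorem binomTail_le_two_pow (M r : ℕ) : binomTail M r ≤ 2 ^ M := by
  rw [← binomTail_zero_right]
  exact sum_le_sum fun t _ => by split_ifs <;> simp_all

theorem binomTail_eq_choose_add (M r : ℕ) :
    binomTail M r = M.choose r + binomTail M (r + 1) := by
  rcases lt_or_ge M r with hMr | hrM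
  · rw [Nat.choose_eq_zero_of_lt hMr, binomTail_of_lt hMr, binomTail_of_lt (by omega)]
  · rw [binomTail, binomTail, ← sum_ite_eq_of_mem' (range (M + 1)) r (M.choose ·)
      (mem_range.2 (by omega)), ← sum_add_distrib]
    refine sum_congr rfl fun t _ => ?_
    split_ifs <;> omega

theorem binomTail_succ_succ (M r : ℕ) :
    binomTail (M + 1) (r + 1) = binomTail M (r + 1) + binomTail M r := by
  have hshift : binomTail M (r + 1) =
      ∑ t ∈ range (M + 1), if r ≤ t then M.choose (t + 1) else 0 := by
    rw [binomTail, sum_range_succ' _ M, sum_range_succ _ M, Nat.choose_succ_self]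
    simp
  rw [binomTail, sum_range_succ', hshift, binomTail, ← sum_add_distrib, if_neg (by omega),
    add_zero]
  refine sum_congr rfl fun t _ => ?_
  rw [Nat.choose_succ_succ']
  split_ifs <;> omega

theorem binomTail_succ_succ_eq_two_mul_add (M r : ℕ) :
    binomTail (M + 1) (r + 1) = 2 * binomTail M (r + 1) + M.choose r := by
  rw [binomTail_succ_succ, binomTail_eq_choose_add M r]
  ring

theorem binomTail_add_two_add_choose (M r : ℕ) :
    binomTail (M + 2) (r + 2) + M.choose (r + 1) = 4 * binomTail M (r + 1) + M.choose r := by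
  have h₁ := binomTail_eq_choose_add M r
  have h₂ := binomTail_eq_choose_add M (r + 1)
  rw [binomTail_succ_succ, binomTail_succ_succ, binomTail_succ_succ]
  omega

theorem choose_le_choose_succ {M s : ℕ} (h : 2 * s + 1 ≤ M) : M.choose s ≤ M.choose (s + 1) := by
  refine Nat.le_of_mul_le_mul_right ?_ (Nat.succ_pos s)
  rw [Nat.choose_succ_right_eq]
  exact Nat.mul_le_mul_left _ (by omega)

theorem choose_succ_le_choose {M s : ℕ} (h : M ≤ 2 * s + 1) : M.choose (s + 1) ≤ M.choose s := by
  refine Nat.le_of_mul_le_mul_right ?_ (Nat.succ_pos s)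
  rw [Nat.choose_succ_right_eq]
  exact Nat.mul_le_mul_left _ (by omega)

/-- `Pr[Bin(M, 1/2) ≥ r]`. -/
noncomputable def binomTailProb (M r : ℕ) : ℝ := binomTail M r / 2 ^ M

theorem binomTailProb_zero_right (M : ℕ) : binomTailProb M 0 = 1 := by
  simp [binomTailProb, binomTail_zero_right]

theorem binomTailProb_le_one (M r : ℕ) : binomTailProb M r ≤ 1 := by
  rw [binomTailProb, div_le_one (by positivity)]
  exact_mod_cast binomTail_le_two_pow M r

theorem binomTailProb_add_two_succ_le {M r : ℕ} (h : 2 * r ≤ M + 1) :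
    binomTailProb (M + 2) (r + 1) ≤ binomTailProb M r := by
  have key : binomTail (M + 2) (r + 1) ≤ 4 * binomTail M r := by
    rcases r with _ | s
    · rw [binomTail_zero_right]
      exact (binomTail_le_two_pow _ _).trans_eq (by ring)
    · show binomTail (M + 2) (s + 2) ≤ 4 * binomTail M (s + 1)
      have := binomTail_add_two_add_choose M s
      have := choose_le_choose_succ (M := M) (s := s) (by omega)
      omega
  rw [binomTailProb, binomTailProb, div_le_div_iff₀ (by positivity) (by positivity), pow_add]
  calc (binomTail (M + 2) (r + 1) : ℝ) * 2 ^ M ≤ (4 * binomTail M r : ℕ) * 2 ^ M := by gcongr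
    _ = binomTail M r * (2 ^ M * 2 ^ 2) := by push_cast; ring

theorem binomTailProb_le_add_two_succ {M r : ℕ} (h : M + 1 ≤ 2 * r) :
    binomTailProb M r ≤ binomTailProb (M + 2) (r + 1) := by
  obtain ⟨s, rfl⟩ : ∃ s, r = s + 1 := ⟨r - 1, by omega⟩
  have key : 4 * binomTail M (s + 1) ≤ binomTail (M + 2) (s + 2) := by
    have := binomTail_add_two_add_choose M s
    have := choose_succ_le_choose (M := M) (s := s) (by omega)
    omega
  rw [binomTailProb, binomTailProb, div_le_div_iff₀ (by positivity) (by positivity), pow_add]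
  calc (binomTail M (s + 1) : ℝ) * (2 ^ M * 2 ^ 2) = (4 * binomTail M (s + 1) : ℕ) * 2 ^ M := by
        push_cast; ring
    _ ≤ binomTail (M + 2) (s + 1 + 1) * 2 ^ M := by gcongr

theorem binomTailProb_add_two_mul_le {M r : ℕ} (h : 2 * r ≤ M + 1) (c : ℕ) :
    binomTailProb (M + 2 * c) (r + c) ≤ binomTailProb M r := by
  induction c with
  | zero => simp
  | succ c ih =>
    calc binomTailProb (M + 2 * (c + 1)) (r + (c + 1))
        = binomTailProb (M + 2 * c + 2) (r + c + 1) := by ring_nf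
      _ ≤ binomTailProb (M + 2 * c) (r + c) := binomTailProb_add_two_succ_le (by omega)
      _ ≤ binomTailProb M r := ih

theorem le_binomTailProb_add_two_mul {M r : ℕ} (h : M + 1 ≤ 2 * r) (c : ℕ) :
    binomTailProb M r ≤ binomTailProb (M + 2 * c) (r + c) := by
  induction c with
  | zero => simp
  | succ c ih =>
    calc binomTailProb M r ≤ binomTailProb (M + 2 * c) (r + c) := ih
      _ ≤ binomTailProb (M + 2 * c + 2) (r + c + 1) := binomTailProb_le_add_two_succ (by omega)
      _ = binomTailProb (M + 2 * (c + 1)) (r + (c + 1)) := by ring_nf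

theorem binomTailProb_le_binomTailProb_sub {m i M c : ℕ} (hMc : M + 2 * c = m)
    (h : 2 * i ≤ m + 1) : binomTailProb m i ≤ binomTailProb M (i - c) := by
  rcases le_or_gt c i with hci | hic
  · obtain ⟨r, rfl⟩ : ∃ r, i = r + c := ⟨i - c, by omega⟩
    rw [Nat.add_sub_cancel, ← hMc]
    exact binomTailProb_add_two_mul_le (by omega) c
  · rw [Nat.sub_eq_zero_of_le hic.le, binomTailProb_zero_right]
    exact binomTailProb_le_one _ _

theorem binomTailProb_sub_le_binomTailProb {m i M c : ℕ} (hMc : M + 2 * c = m)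
    (h : m + 1 ≤ 2 * i) : binomTailProb M (i - c) ≤ binomTailProb m i := by
  obtain ⟨r, rfl⟩ : ∃ r, i = r + c := ⟨i - c, by omega⟩
  rw [Nat.add_sub_cancel, ← hMc]
  exact le_binomTailProb_add_two_mul (by omega) c

/-- The `(r+1)`-th success of fair coin flips comes at flip `r+1+k` with probability
`C(r+k, k) / 2^(r+1+k)`. -/
theorem sum_choose_div_two_pow_eq_binomTailProb (r j : ℕ) :
    ∑ k ∈ range j, ((r + k).choose k : ℝ) / 2 ^ (r + 1 + k) = binomTailProb (r + j) (r + 1) := by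
  induction j with
  | zero => simp [binomTailProb, binomTail_of_lt]
  | succ j ih =>
    rw [sum_range_succ, ih, ← add_assoc, binomTailProb, binomTailProb,
      binomTail_succ_succ_eq_two_mul_add, Nat.choose_symm_add]
    push_cast
    field_simp
    ring

theorem card_filter_powerset_le_card {α : Type*} (F : Finset α) (r : ℕ) :
    #{b ∈ F.powerset | r ≤ #b} = binomTail #F r := by
  rw [card_eq_sum_card_fiberwise (f := card) (t := range (#F + 1))
    fun b hb => mem_range.2 (Nat.lt_succ_of_le (card_le_card (mem_powerset.1 (mem_filter.1 hb).1)))]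
  refine sum_congr rfl fun t _ => ?_
  split_ifs with hrt
  · rw [← card_powersetCard t F, powersetCard_eq_filter, filter_filter]
    congr 1
    exact filter_congr fun b _ => ⟨fun h => h.2, fun h => ⟨h ▸ hrt, h⟩⟩
  · rw [card_eq_zero, filter_eq_empty_iff]
    intro b hb hbt
    exact hrt (hbt ▸ (mem_filter.1 hb).2)

theorem uniformPr_comp_eq_of_card_fiber_eq {β γ : Type*} [Fintype β] [Nonempty β] [DecidableEq γ]
    (Φ : β → γ) (t : Finset γ) (hΦ : ∀ x, Φ x ∈ t) {k : ℕ} (hk : ∀ y ∈ t, #{x | Φ x = y} = k)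
    (P : γ → Prop) [DecidablePred P] : uniformPr (fun x => P (Φ x)) = #{y ∈ t | P y} / #t := by
  have hcount : ∀ (Q : γ → Prop) [DecidablePred Q], #{x | Q (Φ x)} = #{y ∈ t | Q y} * k :=
    fun Q _ => by
      rw [card_eq_sum_card_fiberwise (f := Φ) (t := {y ∈ t | Q y}) fun x hx =>
        mem_filter.2 ⟨hΦ x, (mem_filter.1 hx).2⟩, sum_congr rfl (g := fun _ => k), sum_const,
        smul_eq_mul]
      intro y hy
      rw [← hk y (mem_filter.1 hy).1, filter_filter]
      exact congrArg card
        (filter_congr fun x _ => ⟨fun h => h.2, fun h => ⟨h ▸ (mem_filter.1 hy).2, h⟩⟩)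
  have hβ : Fintype.card β = #t * k := by
    simpa using hcount fun _ => True
  have hk0 : (k : ℝ) ≠ 0 := by
    have := (Fintype.card_pos (α := β)).ne'
    rw [hβ] at this
    exact Nat.cast_ne_zero.2 (right_ne_zero_of_mul this)
  calc uniformPr (fun x => P (Φ x)) = ((#{y ∈ t | P y} * k : ℕ) : ℝ) / (#t * k : ℕ) := by
        rw [uniformPr, hβ]
        congr 2
        convert hcount P
    _ = #{y ∈ t | P y} / #t := by
        push_cast
        exact mul_div_mul_right _ _ hk0

section CardModel

variable {α : Type*} {pair : α → α}

/-- `f x = true` puts the value `x` into the `X`-set; its partner `pair x` then goes to `Y`. -/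
abbrev SideAssignment (pair : α → α) := {f : α → Bool // ∀ x, f (pair x) = !(f x)}

namespace SideAssignment

theorem nonempty [Fintype α] (hinv : ∀ x, pair (pair x) = x) (hnf : ∀ x, pair x ≠ x) :
    Nonempty (SideAssignment pair) :=
  let e := Fintype.equivFin α
  ⟨⟨fun x => decide (e x < e (pair x)), fun x => by
    show decide (e (pair x) < e (pair (pair x))) = !decide (e x < e (pair x))
    rw [hinv]
    rcases (e.injective.ne (hnf x)).lt_or_gt with h | h <;> simp [h, h.not_gt]⟩⟩

/-- Turn over every card that carries a value in `b`. -/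
def flipCards [DecidableEq α] (hinv : ∀ x, pair (pair x) = x) (b : Finset α)
    (f : SideAssignment pair) : SideAssignment pair :=
  ⟨fun x => xor (f.1 x) (decide (x ∈ b ∨ pair x ∈ b)), fun x => by
    show (f.1 (pair x) ^^ decide (pair x ∈ b ∨ pair (pair x) ∈ b)) = !(f.1 x ^^ _)
    simp only [f.2, hinv, or_comm, Bool.not_xor]⟩

theorem flipCards_flipCards [DecidableEq α] (hinv : ∀ x, pair (pair x) = x) (b : Finset α)
    (f : SideAssignment pair) : flipCards hinv b (flipCards hinv b f) = f :=
  Subtype.ext (funext fun _ => Bool.bne_self_right _ _)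

theorem filter_flipCards [DecidableEq α] (hinv : ∀ x, pair (pair x) = x) {F b : Finset α}
    (hF : ∀ x ∈ F, pair x ∉ F) (hb : b ⊆ F) (f : SideAssignment pair) :
    {x ∈ F | (flipCards hinv b f).1 x = true} = symmDiff {x ∈ F | f.1 x = true} b := by
  ext x
  rw [mem_filter, mem_symmDiff, mem_filter]
  by_cases hx : x ∈ F
  · have hpx : pair x ∉ b := fun h => hF x hx (hb h)
    show x ∈ F ∧ (f.1 x ^^ decide (x ∈ b ∨ pair x ∈ b)) = true ↔ _
    cases f.1 x <;> by_cases x ∈ b <;> simp_all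
  · have hxb : x ∉ b := fun h => hx (hb h)
    simp [hx, hxb]

/-- On a set `F` of values on distinct cards, every pattern of `X`-membership is equally
likely. -/
theorem card_fiber_eq_card_fiber_empty [Fintype (SideAssignment pair)] [DecidableEq α]
    (hinv : ∀ x, pair (pair x) = x) {F b : Finset α} (hF : ∀ x ∈ F, pair x ∉ F) (hb : b ⊆ F) :
    #{f : SideAssignment pair | {x ∈ F | f.1 x = true} = b} =
      #{f : SideAssignment pair | {x ∈ F | f.1 x = true} = ∅} := by
  refine card_nbij' (flipCards hinv b) (flipCards hinv b) (fun f hf => ?_) (fun f hf => ?_)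
    (fun f _ => flipCards_flipCards hinv b f) (fun f _ => flipCards_flipCards hinv b f)
  · simp only [coe_filter, mem_univ, true_and, Set.mem_ofPred_eq] at hf ⊢
    rw [filter_flipCards hinv hF hb, hf, symmDiff_self, bot_eq_empty]
  · simp only [coe_filter, mem_univ, true_and, Set.mem_ofPred_eq] at hf ⊢
    rw [filter_flipCards hinv hF hb, hf, ← bot_eq_empty, bot_symmDiff]

theorem card_filter_true_eq_card_filter_false (hinv : ∀ x, pair (pair x) = x)
    (f : SideAssignment pair) {S : Finset α} (hS : ∀ x ∈ S, pair x ∈ S) :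
    #{x ∈ S | f.1 x = true} = #{x ∈ S | f.1 x = false} := by
  refine card_nbij' pair pair (fun x hx => ?_) (fun x hx => ?_) (fun x _ => hinv x)
    (fun x _ => hinv x) <;>
  · simp only [coe_filter, Set.mem_ofPred_eq] at hx ⊢
    simp [hS x hx.1, f.2, hx.2]

theorem two_mul_card_filter_true (hinv : ∀ x, pair (pair x) = x) (f : SideAssignment pair)
    {S : Finset α} (hS : ∀ x ∈ S, pair x ∈ S) : 2 * #{x ∈ S | f.1 x = true} = #S := by
  have := card_filter_true_add_card_filter_false f.1 S
  rw [← card_filter_true_eq_card_filter_false hinv f hS] at this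
  omega

theorem card_filter_true_eq_half_add [DecidableEq α] (hinv : ∀ x, pair (pair x) = x)
    (f : SideAssignment pair) (S : Finset α) :
    #{x ∈ S | f.1 x = true} =
      #{x ∈ S | pair x ∈ S} / 2 + #{x ∈ {x ∈ S | pair x ∉ S} | f.1 x = true} := by
  have hP := two_mul_card_filter_true hinv f (S := {x ∈ S | pair x ∈ S}) fun x hx => by simp_all
  have := card_filter_add_card_filter_not (s := {x ∈ S | f.1 x = true}) (fun x => pair x ∈ S)
  rw [filter_comm, filter_comm (fun x => f.1 x = true)] at this
  omega

end SideAssignment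

-- The `Fintype (SideAssignment pair)` instance is a parameter because over `Fin _` it is built
-- from `Nat.decidableForallFin`, which is not the generic instance and is costly to unfold.
theorem exists_uniformPr_le_card_filter_true_eq_binomTailProb [Fintype α] [DecidableEq α]
    [Fintype (SideAssignment pair)]
    (hinv : ∀ x, pair (pair x) = x) (hnf : ∀ x, pair x ≠ x) (S : Finset α) (r : ℕ) :
    ∃ M c, M + 2 * c = #S ∧
      uniformPr (fun f : SideAssignment pair => r ≤ #{x ∈ S | f.1 x = true}) =
        binomTailProb M (r - c) := by
  have hne := SideAssignment.nonempty hinv hnf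
  refine ⟨#{x ∈ S | pair x ∉ S}, #{x ∈ S | pair x ∈ S} / 2, ?_, ?_⟩
  · obtain ⟨f₀⟩ := hne
    have := SideAssignment.two_mul_card_filter_true hinv f₀ (S := {x ∈ S | pair x ∈ S})
      fun x hx => by simp_all
    have := card_filter_add_card_filter_not (s := S) (fun x => pair x ∈ S)
    omega
  have hF : ∀ x ∈ {x ∈ S | pair x ∉ S}, pair x ∉ ({x ∈ S | pair x ∉ S} : Finset α) :=
    fun x hx hpx => (mem_filter.1 hx).2 (mem_filter.1 hpx).1
  have hevent : (fun f : SideAssignment pair => r ≤ #{x ∈ S | f.1 x = true}) =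
      fun f => r - #{x ∈ S | pair x ∈ S} / 2 ≤ #{x ∈ {x ∈ S | pair x ∉ S} | f.1 x = true} :=
    funext fun f => propext (by rw [SideAssignment.card_filter_true_eq_half_add hinv f S]; omega)
  rw [hevent, uniformPr_comp_eq_of_card_fiber_eq
    (fun f : SideAssignment pair => {x ∈ {x ∈ S | pair x ∉ S} | f.1 x = true})
    {x ∈ S | pair x ∉ S}.powerset (fun f => mem_powerset.2 (filter_subset _ _))
    (fun b hb => SideAssignment.card_fiber_eq_card_fiber_empty hinv hF (mem_powerset.1 hb))
    (fun b => r - #{x ∈ S | pair x ∈ S} / 2 ≤ #b),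
    card_filter_powerset_le_card, card_powerset, binomTailProb]
  push_cast
  rfl

end CardModel

theorem card_filter_le_apply_of_strictAnti {N : ℕ} {a : Fin N → ℝ} (ha : StrictAnti a)
    {p : ℕ} (hp : p < N) : #(univ.filter fun x => a ⟨p, hp⟩ ≤ a x) = p + 1 := by
  rw [← Fin.card_Iic ⟨p, hp⟩]
  congr 1
  ext x
  simp [ha.le_iff_ge]

theorem exists_uniformPr_kthLargest_gt_eq_binomTailProb (n i j : ℕ) (hi1 : 1 ≤ i) (hj1 : 1 ≤ j)
    (hi : i ≤ n) (hj : j ≤ n) {a : Fin (2 * n) → ℝ} (ha : StrictAnti a) {pair : Fin (2 * n) → Fin (2 * n)}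
    (hinv : ∀ x, pair (pair x) = x) (hnf : ∀ x, pair x ≠ x) :
    ∃ M c, M + 2 * c = i + j - 1 ∧
      uniformPr (fun f : SideAssignment pair =>
          kthLargest ((univ.filter fun x => f.1 x = true).image a) i >
            kthLargest ((univ.filter fun x => f.1 x = false).image a) j) =
        binomTailProb M (i - c) := by
  have hv := card_filter_le_apply_of_strictAnti ha (p := i + j - 2) (by omega)
  obtain ⟨M, c, hMc, hPr⟩ := exists_uniformPr_le_card_filter_true_eq_binomTailProb hinv hnf
    (univ.filter fun x => a ⟨i + j - 2, by omega⟩ ≤ a x) i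
  refine ⟨M, c, by rw [hMc, hv]; omega, ?_⟩
  rw [← hPr]
  refine congrArg uniformPr (funext fun f => propext ?_)
  have hX := SideAssignment.two_mul_card_filter_true hinv f (S := univ) fun x _ => mem_univ (pair x)
  have hXY := card_filter_true_add_card_filter_false f.1 univ
  rw [card_univ, Fintype.card_fin] at hX hXY
  exact kthLargest_image_lt_kthLargest_image_iff ha.injective f.1 hi1 (by omega) hj1 (by omega)
    (by rw [hv]; omega)

theorem cross_rank_domination_monotonicity (n i j : ℕ)
    (hi1 : 1 ≤ i) (hj1 : 1 ≤ j) (hi : i ≤ n) (hj : j ≤ n)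
    (a : Fin (2 * n) → ℝ) (ha : StrictAnti a)
    (pair : Fin (2 * n) → Fin (2 * n))
    (hinv : ∀ x, pair (pair x) = x) (hnf : ∀ x, pair x ≠ x) :
    (i ≤ j →
      uniformPr (fun f : {f : Fin (2 * n) → Bool // ∀ x, f (pair x) = !(f x)} =>
          kthLargest ((Finset.univ.filter (fun x => f.1 x = true)).image a) i >
            kthLargest ((Finset.univ.filter (fun x => f.1 x = false)).image a) j) ≥
        ∑ k ∈ Finset.range j, (Nat.choose (i - 1 + k) k : ℝ) / 2 ^ (i + k)) ∧
    (j ≤ i →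
      uniformPr (fun f : {f : Fin (2 * n) → Bool // ∀ x, f (pair x) = !(f x)} =>
          kthLargest ((Finset.univ.filter (fun x => f.1 x = true)).image a) i >
            kthLargest ((Finset.univ.filter (fun x => f.1 x = false)).image a) j) ≤
        ∑ k ∈ Finset.range j, (Nat.choose (i - 1 + k) k : ℝ) / 2 ^ (i + k)) := by
  obtain ⟨M, c, hMc, hPr⟩ :=
    exists_uniformPr_kthLargest_gt_eq_binomTailProb n i j hi1 hj1 hi hj ha hinv hnf
  obtain ⟨r, rfl⟩ : ∃ r, i = r + 1 := ⟨i - 1, by omega⟩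
  have hp : ∑ k ∈ range j, ((r + 1 - 1 + k).choose k : ℝ) / 2 ^ (r + 1 + k) =
      binomTailProb (r + 1 + j - 1) (r + 1) := by
    rw [Nat.add_sub_cancel, sum_choose_div_two_pow_eq_binomTailProb, Nat.add_right_comm,
      Nat.add_sub_cancel]
  rw [hPr, hp]
  exact ⟨fun hij => binomTailProb_le_binomTailProb_sub hMc (by omega),
    fun hji => binomTailProb_sub_le_binomTailProb hMc (by omega)⟩
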